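/- Suppose (𝒳, S, γ, (Λ_a)_{a∈A}) is a spectral decomposition system for a Euclidean space 𝔥 with {Λ_a : a ∈ A} closed in L(𝒳,𝔥). Let φ : 𝒳 → [−∞,+∞] be S-invariant and let X ∈ 𝔥 be such that φ(γ(X)) ∈ ℝ. Then φ∘γ is Fréchet differentiable at X if and only if φ is Fréchet differentiable at γ(X), in which case ∇(φ∘γ)(X) = Λ_a(∇φ(γ(X))) for every a ∈ A_X. -/

import Mathlib

open Filter Topology Set Metric
open scoped RealInnerProductSpace

noncomputable section

/-- A spectral decomposition system `(𝒳, S, γ, (Λ_a)_{a ∈ A})` for the space `H`: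
`S` acts on `𝒳` by linear isometries (via `act`), `γ : H → 𝒳` is the spectral
mapping, each `Λ a : 𝒳 → H` is a linear isometry, and the axioms [A], [B], [C] hold,
with `τ` the `S`-invariant ordering mapping of axiom [A]. -/
structure SDS (𝒳 H : Type*) [NormedAddCommGroup 𝒳] [InnerProductSpace ℝ 𝒳]
    [NormedAddCommGroup H] [InnerProductSpace ℝ H]
    (S : Type*) [Group S] (A : Type*) where
  act : S →* (𝒳 ≃ₗᵢ[ℝ] 𝒳)
  γ : H → 𝒳
  Λ : A → 𝒳 →ₗᵢ[ℝ] H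
  τ : 𝒳 → 𝒳
  τ_inv : ∀ (s : S) (x : 𝒳), τ (act s x) = τ x
  τ_orbit : ∀ x : 𝒳, ∃ s : S, τ x = act s x
  γΛ : ∀ (a : A) (x : 𝒳), γ (Λ a x) = τ x
  decomp : ∀ X : H, ∃ a : A, X = Λ a (γ X)
  inner_le : ∀ X Y : H, ⟪X, Y⟫ ≤ ⟪γ X, γ Y⟫

variable {𝒳 H S A : Type*} [NormedAddCommGroup 𝒳] [InnerProductSpace ℝ 𝒳]
    [NormedAddCommGroup H] [InnerProductSpace ℝ H] [Group S]

/-- The set `{Λ_a : a ∈ A}`, regarded as a subset of the space `L(𝒳, H)` of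
continuous linear maps with the operator norm. -/
def SDS.LambdaSet (𝔖 : SDS 𝒳 H S A) : Set (𝒳 →L[ℝ] H) :=
  {L | ∃ a : A, L = (𝔖.Λ a).toContinuousLinearMap}

/-- `A_X = {a ∈ A : X = Λ_a (γ X)}`. -/
def SDS.AX (𝔖 : SDS 𝒳 H S A) (X : H) : Set A := {a | X = 𝔖.Λ a (𝔖.γ X)}

/-- `f : E → [-∞, +∞]` has Fréchet gradient `g` at `x`: `f x` is finite and
`lim_{z → x, z ≠ x} |f(z) - f(x) - ⟨z - x, g⟩| / ‖z - x‖ = 0` (in particular `f`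
is finite near `x`), in ε-δ form. -/
def EHasGradientAt {E : Type*} [NormedAddCommGroup E] [InnerProductSpace ℝ E]
    (f : E → EReal) (g x : E) : Prop :=
  (∃ r : ℝ, f x = (r : EReal)) ∧ ∀ ε : ℝ, 0 < ε → ∃ δ : ℝ, 0 < δ ∧
    ∀ z : E, ‖z - x‖ < δ → ∃ rz rx : ℝ, f z = (rz : EReal) ∧ f x = (rx : EReal) ∧
      |rz - rx - ⟪z - x, g⟫| ≤ ε * ‖z - x‖

/-- `f` is Fréchet differentiable at `x`: there is a unique gradient `∇f(x)`. -/
def EFDiffAt {E : Type*} [NormedAddCommGroup E] [InnerProductSpace ℝ E]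
    (f : E → EReal) (x : E) : Prop :=
  ∃! g : E, EHasGradientAt f g x

/-!
Fix `a` with `Λ_a (γ X) = X`. Since `φ ∘ τ = φ` and `γ ∘ Λ_a = τ`, we have `φ = (φ ∘ γ) ∘ Λ_a`, so a
gradient `G` of `φ ∘ γ` at `X` gives the gradient `Λ_a^* G` of `φ` at `γ X`.

Conversely let `g = ∇φ(γ X)`. Invariance of `φ` forces `g` to be orthogonal, to first order, to the
displacements `s • y - y` along `S`-orbits near `γ X`. Testing axiom [C], `⟪Z, Λ_a w⟫ ≤ ⟪γ Z, τ w⟫`,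
at `w = γ X + t g`, with `t` a large multiple of `‖Z - X‖`, then shows
`⟪γ Z - γ X, g⟫ = ⟪Z - X, Λ_a g⟫ + o(‖Z - X‖)`, and as `γ` is `1`-Lipschitz the chain rule gives
`∇(φ ∘ γ)(X) = Λ_a g`.
-/

section

variable {E E' : Type*} [NormedAddCommGroup E] [InnerProductSpace ℝ E]
  [NormedAddCommGroup E'] [InnerProductSpace ℝ E']

theorem norm_sub_le_of_norm_eq_of_inner_le {x y : E} {x' y' : E'}
    (hx : ‖x'‖ = ‖x‖) (hy : ‖y'‖ = ‖y‖) (h : ⟪x, y⟫ ≤ ⟪x', y'⟫) : ‖x' - y'‖ ≤ ‖x - y‖ := by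
  refine (pow_le_pow_iff_left₀ (norm_nonneg _) (norm_nonneg _) two_ne_zero).mp ?_
  rw [norm_sub_sq_real, norm_sub_sq_real, hx, hy]
  linarith

theorem inner_sub_add_smul_le_of_norm_eq {p q g : E} {t ε δ : ℝ} (hq : ‖q‖ = ‖p‖)
    (ht : 0 ≤ t) (htg : 2 * t * ‖g‖ ≤ δ) (hqg : ‖q - p‖ < δ → ⟪q - p, g⟫ ≤ ε * ‖q - p‖) :
    ⟪q - p, p + t • g⟫ ≤ (ε * t) ^ 2 / 2 := by
  have hpp : ⟪q - p, p⟫ = -‖q - p‖ ^ 2 / 2 := by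
    rw [norm_sub_sq_real, hq, inner_sub_left, real_inner_self_eq_norm_sq, real_inner_comm]
    ring
  rw [inner_add_right, real_inner_smul_right, hpp]
  rcases lt_or_ge ‖q - p‖ δ with hd | hd
  · have := mul_le_mul_of_nonneg_left (hqg hd) ht
    nlinarith [sq_nonneg (‖q - p‖ - ε * t)]
  · have h₁ := mul_le_mul_of_nonneg_left (real_inner_le_norm (q - p) g) ht
    have h₂ := mul_le_mul_of_nonneg_left (htg.trans hd) (norm_nonneg (q - p))
    nlinarith [sq_nonneg (ε * t)]

theorem eq_zero_of_forall_abs_inner_le {v : E}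
    (h : ∀ ε > 0, ∃ δ > 0, ∀ z : E, ‖z‖ < δ → |⟪z, v⟫| ≤ ε * ‖z‖) : v = 0 := by
  by_contra hv
  have hv' : 0 < ‖v‖ := norm_pos_iff.mpr hv
  obtain ⟨δ, hδ, hz⟩ := h (‖v‖ / 2) (by positivity)
  set c := δ / (2 * ‖v‖)
  have hc : 0 < c := by positivity
  have hnorm : ‖c • v‖ = c * ‖v‖ := by rw [norm_smul, Real.norm_of_nonneg hc.le]
  have hcv : c * ‖v‖ < δ := by
    have : c * ‖v‖ = δ / 2 := by simp only [c]; field_simp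
    linarith
  have key := hz (c • v) (hnorm ▸ hcv)
  rw [real_inner_smul_left, real_inner_self_eq_norm_sq, hnorm,
    abs_of_nonneg (by positivity)] at key
  nlinarith [mul_pos hc hv']

theorem EHasGradientAt.unique {f : E → EReal} {g₁ g₂ x : E} (h₁ : EHasGradientAt f g₁ x)
    (h₂ : EHasGradientAt f g₂ x) : g₁ = g₂ := by
  refine sub_eq_zero.mp (eq_zero_of_forall_abs_inner_le fun ε hε => ?_)
  obtain ⟨δ₁, hδ₁, H₁⟩ := h₁.2 (ε / 2) (half_pos hε)
  obtain ⟨δ₂, hδ₂, H₂⟩ := h₂.2 (ε / 2) (half_pos hε)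
  refine ⟨min δ₁ δ₂, lt_min hδ₁ hδ₂, fun z hz => ?_⟩
  obtain ⟨rz, rx, hrz, hrx, hb₁⟩ := H₁ (x + z) (by simpa using hz.trans_le (min_le_left _ _))
  obtain ⟨rz', rx', hrz', hrx', hb₂⟩ := H₂ (x + z) (by simpa using hz.trans_le (min_le_right _ _))
  obtain rfl : rz' = rz := EReal.coe_injective (hrz'.symm.trans hrz)
  obtain rfl : rx' = rx := EReal.coe_injective (hrx'.symm.trans hrx)
  rw [add_sub_cancel_left] at hb₁ hb₂
  rw [inner_sub_right]
  obtain ⟨hl₁, hu₁⟩ := abs_le.mp hb₁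
  obtain ⟨hl₂, hu₂⟩ := abs_le.mp hb₂
  exact abs_le.mpr ⟨by linarith, by linarith⟩

theorem efDiffAt_iff_exists_eHasGradientAt {f : E → EReal} {x : E} :
    EFDiffAt f x ↔ ∃ g, EHasGradientAt f g x :=
  ⟨fun ⟨g, hg, _⟩ => ⟨g, hg⟩, fun ⟨g, hg⟩ => ⟨g, hg, fun _ h => h.unique hg⟩⟩

theorem EHasGradientAt.abs_inner_sub_le_of_eq {f : E → EReal} {g x : E} {ε : ℝ}
    (hf : EHasGradientAt f g x) (hε : 0 < ε) :
    ∃ δ > 0, ∀ y z : E, ‖y - x‖ < δ → ‖z - x‖ < δ → f y = f z →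
      |⟪y - z, g⟫| ≤ ε * (‖y - x‖ + ‖z - x‖) := by
  obtain ⟨δ, hδ, H⟩ := hf.2 ε hε
  refine ⟨δ, hδ, fun y z hy hz hyz => ?_⟩
  obtain ⟨ry, rx, hry, hrx, hb₁⟩ := H y hy
  obtain ⟨rz, rx', hrz, hrx', hb₂⟩ := H z hz
  obtain rfl : rz = ry := EReal.coe_injective (hrz.symm.trans (hyz.symm.trans hry))
  obtain rfl : rx' = rx := EReal.coe_injective (hrx'.symm.trans hrx)
  rw [← sub_sub_sub_cancel_right y z x, inner_sub_left]
  obtain ⟨hl₁, hu₁⟩ := abs_le.mp hb₁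
  obtain ⟨hl₂, hu₂⟩ := abs_le.mp hb₂
  exact abs_le.mpr ⟨by linarith, by linarith⟩

/-- A chain rule in which only the pairing `z ↦ ⟪F z, g⟫` with the outer gradient has to be
differentiable. -/
theorem EHasGradientAt.comp_of_inner_sub_le {f : E' → EReal} {F : E → E'} {x G : E} {g : E'}
    (hf : EHasGradientAt f g (F x)) (hF : ∀ z, ‖F z - F x‖ ≤ ‖z - x‖)
    (hFg : ∀ ε > 0, ∃ δ > 0, ∀ z, ‖z - x‖ < δ →
      |⟪F z - F x, g⟫ - ⟪z - x, G⟫| ≤ ε * ‖z - x‖) :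
    EHasGradientAt (f ∘ F) G x := by
  refine ⟨hf.1, fun ε hε => ?_⟩
  obtain ⟨δ₁, hδ₁, H₁⟩ := hf.2 (ε / 2) (half_pos hε)
  obtain ⟨δ₂, hδ₂, H₂⟩ := hFg (ε / 2) (half_pos hε)
  refine ⟨min δ₁ δ₂, lt_min hδ₁ hδ₂, fun z hz => ?_⟩
  obtain ⟨rz, rx, hrz, hrx, hb₁⟩ := H₁ (F z) ((hF z).trans_lt (hz.trans_le (min_le_left _ _)))
  refine ⟨rz, rx, hrz, hrx, ?_⟩
  have hb₂ := H₂ z (hz.trans_le (min_le_right _ _))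
  have hFz : ε / 2 * ‖F z - F x‖ ≤ ε / 2 * ‖z - x‖ :=
    mul_le_mul_of_nonneg_left (hF z) (half_pos hε).le
  obtain ⟨hl₁, hu₁⟩ := abs_le.mp hb₁
  obtain ⟨hl₂, hu₂⟩ := abs_le.mp hb₂
  exact abs_le.mpr ⟨by linarith, by linarith⟩

theorem EHasGradientAt.comp_linearIsometry {f : E' → EReal} (Λ : E →ₗᵢ[ℝ] E') {x g : E} {G : E'}
    (hf : EHasGradientAt f G (Λ x)) (hg : ∀ v, ⟪Λ v, G⟫ = ⟪v, g⟫) :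
    EHasGradientAt (f ∘ Λ) g x :=
  hf.comp_of_inner_sub_le (fun z => by rw [← map_sub, Λ.norm_map])
    fun _ _ => ⟨1, one_pos, fun z _ => by
      rw [← map_sub, hg, sub_self, abs_zero]; positivity⟩

end

namespace SDS

variable (𝔖 : SDS 𝒳 H S A)

theorem norm_γ (U : H) : ‖𝔖.γ U‖ = ‖U‖ := by
  obtain ⟨a, ha⟩ := 𝔖.decomp U
  conv_rhs => rw [ha, (𝔖.Λ a).norm_map]

theorem norm_γ_sub_γ_le (U V : H) : ‖𝔖.γ U - 𝔖.γ V‖ ≤ ‖U - V‖ :=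
  norm_sub_le_of_norm_eq_of_inner_le (𝔖.norm_γ U) (𝔖.norm_γ V) (𝔖.inner_le U V)

theorem norm_τ (x : 𝒳) : ‖𝔖.τ x‖ = ‖x‖ := by
  obtain ⟨s, hs⟩ := 𝔖.τ_orbit x
  rw [hs, (𝔖.act s).norm_map]

theorem inner_le_inner_τ (x y : 𝒳) : ⟪x, y⟫ ≤ ⟪𝔖.τ x, 𝔖.τ y⟫ := by
  obtain ⟨a, -⟩ := 𝔖.decomp 0
  calc ⟪x, y⟫ = ⟪𝔖.Λ a x, 𝔖.Λ a y⟫ := ((𝔖.Λ a).inner_map_map x y).symm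
    _ ≤ ⟪𝔖.γ (𝔖.Λ a x), 𝔖.γ (𝔖.Λ a y)⟫ := 𝔖.inner_le _ _
    _ = ⟪𝔖.τ x, 𝔖.τ y⟫ := by rw [𝔖.γΛ, 𝔖.γΛ]

theorem norm_τ_sub_τ_le (x y : 𝒳) : ‖𝔖.τ x - 𝔖.τ y‖ ≤ ‖x - y‖ :=
  norm_sub_le_of_norm_eq_of_inner_le (𝔖.norm_τ x) (𝔖.norm_τ y) (𝔖.inner_le_inner_τ x y)

theorem τ_γ (U : H) : 𝔖.τ (𝔖.γ U) = 𝔖.γ U := by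
  obtain ⟨a, ha⟩ := 𝔖.decomp U
  conv_rhs => rw [ha, 𝔖.γΛ]

theorem apply_τ_of_invariant {β : Type*} {φ : 𝒳 → β} (hφ : ∀ (s : S) (x : 𝒳), φ (𝔖.act s x) = φ x)
    (x : 𝒳) : φ (𝔖.τ x) = φ x := by
  obtain ⟨s, hs⟩ := 𝔖.τ_orbit x
  rw [hs, hφ]

/-- On the `δ`-ball around `p`, `g` is `ε`-orthogonal to the displacements along `S`-orbits. -/
def AlmostOrthogonalToOrbits (g p : 𝒳) (ε δ : ℝ) : Prop :=
  ∀ (s : S) (y : 𝒳), ‖y - p‖ < δ → ‖𝔖.act s y - p‖ < δ →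
    |⟪𝔖.act s y - y, g⟫| ≤ ε * (‖𝔖.act s y - p‖ + ‖y - p‖)

variable {𝔖}

theorem AlmostOrthogonalToOrbits.neg {g p : 𝒳} {ε δ : ℝ}
    (h : 𝔖.AlmostOrthogonalToOrbits g p ε δ) : 𝔖.AlmostOrthogonalToOrbits (-g) p ε δ :=
  fun s y hy hsy => by simpa only [inner_neg_right, abs_neg] using h s y hy hsy

theorem almostOrthogonalToOrbits_of_eHasGradientAt {φ : 𝒳 → EReal}
    (hφ : ∀ (s : S) (x : 𝒳), φ (𝔖.act s x) = φ x) {g p : 𝒳} (hg : EHasGradientAt φ g p)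
    {ε : ℝ} (hε : 0 < ε) : ∃ δ > 0, 𝔖.AlmostOrthogonalToOrbits g p ε δ := by
  obtain ⟨δ, hδ, H⟩ := hg.abs_inner_sub_le_of_eq hε
  exact ⟨δ, hδ, fun s y hy hsy => H _ _ hsy hy (hφ s y)⟩

theorem inner_τ_sub_le {g p : 𝒳} {t ε δ : ℝ} (h : 𝔖.AlmostOrthogonalToOrbits g p ε δ)
    (ht : 0 ≤ t) (htg : 2 * t * ‖g‖ ≤ δ) :
    ⟪p, 𝔖.τ (p + t • g) - (p + t • g)⟫ ≤ (ε * t) ^ 2 / 2 := by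
  obtain ⟨s, hs⟩ := 𝔖.τ_orbit (p + t • g)
  have hsq : 𝔖.act s (𝔖.act s⁻¹ p) = p := by
    rw [map_inv]
    exact (𝔖.act s).apply_symm_apply p
  set q := 𝔖.act s⁻¹ p
  have hpq : ⟪p, 𝔖.τ (p + t • g) - (p + t • g)⟫ = ⟪q - p, p + t • g⟫ := by
    rw [hs, inner_sub_right, inner_sub_left]
    congr 1
    calc ⟪p, 𝔖.act s (p + t • g)⟫ = ⟪𝔖.act s q, 𝔖.act s (p + t • g)⟫ := by rw [hsq]
      _ = ⟪q, p + t • g⟫ := LinearIsometryEquiv.inner_map_map _ _ _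
  rw [hpq]
  refine inner_sub_add_smul_le_of_norm_eq ((𝔖.act s⁻¹).norm_map p) ht htg fun hd => ?_
  have hδ : ‖p - p‖ < δ := by simpa using (norm_nonneg _).trans_lt hd
  have := (abs_le.mp (h s⁻¹ p hδ hd)).2
  rwa [sub_self, norm_zero, add_zero] at this

theorem norm_τ_sub_sq_le {p : 𝒳} (hp : 𝔖.τ p = p) (t : ℝ) (g : 𝒳) :
    ‖𝔖.τ (p + t • g) - (p + t • g)‖ ^ 2 ≤ -2 * t * ⟪𝔖.τ (p + t • g) - (p + t • g), g⟫ := by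
  set w := p + t • g with hw
  have h₁ : ‖𝔖.τ w - w‖ ^ 2 = 2 * ‖w‖ ^ 2 - 2 * ⟪𝔖.τ w, w⟫ := by
    rw [norm_sub_sq_real, 𝔖.norm_τ]; ring
  have h₂ : ⟪w, p⟫ ≤ ⟪𝔖.τ w, p⟫ := by
    have := 𝔖.inner_le_inner_τ w p
    rwa [hp] at this
  have h₃ : ⟪𝔖.τ w, w⟫ = ⟪𝔖.τ w, p⟫ + t * ⟪𝔖.τ w, g⟫ := by
    rw [hw, inner_add_right, real_inner_smul_right]
  have h₄ : ‖w‖ ^ 2 = ⟪w, p⟫ + t * ⟪w, g⟫ := by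
    rw [← real_inner_self_eq_norm_sq, hw, inner_add_right, real_inner_smul_right]
  have h₅ : ⟪𝔖.τ w, g⟫ = ⟪w, g⟫ + ⟪𝔖.τ w - w, g⟫ := by
    rw [inner_sub_left]; ring
  rw [h₅, mul_add] at h₃
  linarith

theorem norm_τ_sub_sq_le_of_almostOrthogonalToOrbits {g p : 𝒳} {t ε δ : ℝ} (hp : 𝔖.τ p = p)
    (h : 𝔖.AlmostOrthogonalToOrbits g p ε δ) (hε : 0 ≤ ε) (ht : 0 ≤ t) (htg : t * ‖g‖ < δ) :
    ‖𝔖.τ (p + t • g) - (p + t • g)‖ ^ 2 ≤ 4 * ε * t ^ 2 * ‖g‖ := by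
  set w := p + t • g with hw
  obtain ⟨s, hs⟩ := 𝔖.τ_orbit w
  have hwp : ‖w - p‖ = t * ‖g‖ := by
    rw [hw, add_sub_cancel_left, norm_smul, Real.norm_of_nonneg ht]
  have hτwp : ‖𝔖.τ w - p‖ ≤ ‖w - p‖ := by
    have := 𝔖.norm_τ_sub_τ_le w p
    rwa [hp] at this
  have hδ : ‖w - p‖ < δ := hwp ▸ htg
  have horb := h s w hδ (hs ▸ hτwp.trans_lt hδ)
  rw [← hs] at horb
  have hlow : -(2 * ε * (t * ‖g‖)) ≤ ⟪𝔖.τ w - w, g⟫ := by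
    have := mul_le_mul_of_nonneg_left hτwp hε
    rw [← hwp]
    linarith [(abs_le.mp horb).1]
  have := mul_le_mul_of_nonneg_left hlow ht
  linarith [𝔖.norm_τ_sub_sq_le hp t g]

/-- Axiom [C] tested at `w = γ X + t • g`. -/
theorem mul_inner_sub_le {X : H} {a : A} (ha : 𝔖.Λ a (𝔖.γ X) = X) (Z : H) (t : ℝ) (g : 𝒳) :
    t * (⟪Z - X, 𝔖.Λ a g⟫ - ⟪𝔖.γ Z - 𝔖.γ X, g⟫) ≤
      ‖Z - X‖ ^ 2 / 2 + ‖𝔖.τ (𝔖.γ X + t • g) - (𝔖.γ X + t • g)‖ ^ 2 / 2 +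
        ⟪𝔖.γ X, 𝔖.τ (𝔖.γ X + t • g) - (𝔖.γ X + t • g)⟫ := by
  have hpX : ‖𝔖.γ X‖ = ‖X‖ := 𝔖.norm_γ X
  have hZ : ‖𝔖.γ Z‖ = ‖Z‖ := 𝔖.norm_γ Z
  set p := 𝔖.γ X
  set w := p + t • g with hw
  set e := 𝔖.τ w - w
  have hC : ⟪Z, 𝔖.Λ a w⟫ ≤ ⟪𝔖.γ Z, 𝔖.τ w⟫ := 𝔖.γΛ a w ▸ 𝔖.inner_le Z (𝔖.Λ a w)
  have hL : ⟪Z, 𝔖.Λ a w⟫ = ⟪Z, X⟫ + t * ⟪Z, 𝔖.Λ a g⟫ := by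
    rw [hw, map_add, map_smul, ha, inner_add_right, real_inner_smul_right]
  have hR : ⟪𝔖.γ Z, 𝔖.τ w⟫ = ⟪𝔖.γ Z, p⟫ + t * ⟪𝔖.γ Z, g⟫ + ⟪p, e⟫ + ⟪𝔖.γ Z - p, e⟫ := by
    have : 𝔖.τ w = w + e := (add_sub_cancel w (𝔖.τ w)).symm
    rw [this, inner_add_right, hw, inner_add_right, real_inner_smul_right, inner_sub_left]
    ring
  have hXg : ⟪X, 𝔖.Λ a g⟫ = ⟪p, g⟫ := by rw [← ha, LinearIsometry.inner_map_map]
  have hZX : ⟪𝔖.γ Z, p⟫ - ⟪Z, X⟫ = (‖Z - X‖ ^ 2 - ‖𝔖.γ Z - p‖ ^ 2) / 2 := by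
    rw [norm_sub_sq_real, norm_sub_sq_real, hZ, hpX]; ring
  have hue : ⟪𝔖.γ Z - p, e⟫ ≤ (‖𝔖.γ Z - p‖ ^ 2 + ‖e‖ ^ 2) / 2 := by
    linarith [norm_sub_sq_real (𝔖.γ Z - p) e, sq_nonneg ‖𝔖.γ Z - p - e‖]
  rw [inner_sub_left, inner_sub_left, hXg]
  linarith

theorem inner_sub_inner_γ_sub_le {X : H} {a : A} (ha : 𝔖.Λ a (𝔖.γ X) = X) {g : 𝒳} {η δ : ℝ}
    (hη : 0 < η) (hη₁ : η ≤ 1) (h : 𝔖.AlmostOrthogonalToOrbits g (𝔖.γ X) (η ^ 2) δ) {Z : H}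
    (hZ : ‖Z - X‖ < η * δ / (2 * (‖g‖ + 1))) :
    ⟪Z - X, 𝔖.Λ a g⟫ - ⟪𝔖.γ Z - 𝔖.γ X, g⟫ ≤ η * (1 + 2 * ‖g‖) * ‖Z - X‖ := by
  rcases eq_or_ne Z X with rfl | hZX
  · simp
  have hr : 0 < ‖Z - X‖ := norm_pos_iff.mpr (sub_ne_zero.mpr hZX)
  -- the error terms of `mul_inner_sub_le` are then all `O(‖Z - X‖ ^ 2)`
  set t := ‖Z - X‖ / η
  have ht : 0 < t := by positivity
  have hrt : ‖Z - X‖ = η * t := by simp only [t]; field_simp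
  rw [lt_div_iff₀ (by positivity), hrt] at hZ
  have htg : 2 * t * ‖g‖ ≤ δ := by nlinarith
  have h₀ := 𝔖.mul_inner_sub_le ha Z t g
  have h₁ := 𝔖.inner_τ_sub_le h ht.le htg
  have h₂ := norm_τ_sub_sq_le_of_almostOrthogonalToOrbits (𝔖.τ_γ X) h (sq_nonneg η) ht.le
    (by nlinarith [norm_nonneg g])
  have hη₂ : η ^ 2 * (η ^ 2 * t ^ 2) ≤ 1 * (η ^ 2 * t ^ 2) :=
    mul_le_mul_of_nonneg_right (pow_le_one₀ hη.le hη₁) (by positivity)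
  refine le_of_mul_le_mul_left ?_ ht
  rw [hrt] at h₀ ⊢
  nlinarith

theorem abs_inner_γ_sub_sub_le {X : H} {a : A} (ha : 𝔖.Λ a (𝔖.γ X) = X) {g : 𝒳}
    (h : ∀ ε > 0, ∃ δ > 0, 𝔖.AlmostOrthogonalToOrbits g (𝔖.γ X) ε δ) :
    ∀ ε > 0, ∃ δ > 0, ∀ Z, ‖Z - X‖ < δ →
      |⟪𝔖.γ Z - 𝔖.γ X, g⟫ - ⟪Z - X, 𝔖.Λ a g⟫| ≤ ε * ‖Z - X‖ := by
  intro ε hε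
  set η := min 1 (ε / (1 + 2 * ‖g‖))
  have hη : 0 < η := lt_min one_pos (by positivity)
  have hηε : η * (1 + 2 * ‖g‖) ≤ ε :=
    (le_div_iff₀ (by positivity)).mp (min_le_right _ _)
  obtain ⟨δ, hδ, hg⟩ := h (η ^ 2) (by positivity)
  refine ⟨η * δ / (2 * (‖g‖ + 1)), by positivity, fun Z hZ => ?_⟩
  have hpos := inner_sub_inner_γ_sub_le ha hη (min_le_left _ _) hg hZ
  have hneg := inner_sub_inner_γ_sub_le ha hη (min_le_left _ _) hg.neg (by rwa [norm_neg])
  simp only [map_neg, inner_neg_right, norm_neg] at hneg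
  have := mul_le_mul_of_nonneg_right hηε (norm_nonneg (Z - X))
  exact abs_le.mpr ⟨by linarith, by linarith⟩

theorem eHasGradientAt_comp_γ {φ : 𝒳 → EReal} (hφ : ∀ (s : S) (x : 𝒳), φ (𝔖.act s x) = φ x)
    {X : H} {a : A} (ha : 𝔖.Λ a (𝔖.γ X) = X) {g : 𝒳} (hg : EHasGradientAt φ g (𝔖.γ X)) :
    EHasGradientAt (φ ∘ 𝔖.γ) (𝔖.Λ a g) X :=
  hg.comp_of_inner_sub_le (fun Z => 𝔖.norm_γ_sub_γ_le Z X)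
    (abs_inner_γ_sub_sub_le ha fun _ hε => almostOrthogonalToOrbits_of_eHasGradientAt hφ hg hε)

theorem exists_eHasGradientAt_of_comp_γ [CompleteSpace 𝒳] {φ : 𝒳 → EReal}
    (hφ : ∀ (s : S) (x : 𝒳), φ (𝔖.act s x) = φ x) {X : H} {a : A} (ha : 𝔖.Λ a (𝔖.γ X) = X)
    {G : H} (hG : EHasGradientAt (φ ∘ 𝔖.γ) G X) : ∃ g, EHasGradientAt φ g (𝔖.γ X) := by
  have hφΛ : φ = (φ ∘ 𝔖.γ) ∘ 𝔖.Λ a :=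
    funext fun x => by simp only [Function.comp_apply, 𝔖.γΛ, 𝔖.apply_τ_of_invariant hφ]
  set g := (InnerProductSpace.toDual ℝ 𝒳).symm ((innerSL ℝ G).comp (𝔖.Λ a).toContinuousLinearMap)
  have hg : ∀ v, ⟪𝔖.Λ a v, G⟫ = ⟪v, g⟫ := fun v => by
    rw [real_inner_comm g v, InnerProductSpace.toDual_symm_apply, real_inner_comm]; rfl
  rw [← ha] at hG
  exact ⟨g, hφΛ ▸ hG.comp_linearIsometry (𝔖.Λ a) hg⟩

end SDS

theorem frechet_diff_spectral_iff_general
    [FiniteDimensional ℝ 𝒳]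
    (𝔖 : SDS 𝒳 H S A)
    (φ : 𝒳 → EReal) (hφ : ∀ (s : S) (x : 𝒳), φ (𝔖.act s x) = φ x)
    (X : H) :
    (EFDiffAt (fun Z => φ (𝔖.γ Z)) X ↔ EFDiffAt φ (𝔖.γ X)) ∧
    (∀ a ∈ 𝔖.AX X, ∀ g : 𝒳, EHasGradientAt φ g (𝔖.γ X) →
      EHasGradientAt (fun Z => φ (𝔖.γ Z)) (𝔖.Λ a g) X) := by
  obtain ⟨a, ha⟩ := 𝔖.decomp X
  refine ⟨?_, fun b hb g hg => 𝔖.eHasGradientAt_comp_γ hφ hb.symm hg⟩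
  rw [efDiffAt_iff_exists_eHasGradientAt, efDiffAt_iff_exists_eHasGradientAt]
  exact ⟨fun ⟨_, hG⟩ => 𝔖.exists_eHasGradientAt_of_comp_γ hφ ha.symm hG,
    fun ⟨_, hg⟩ => ⟨_, 𝔖.eHasGradientAt_comp_γ hφ ha.symm hg⟩⟩

/-- For an `S`-invariant `φ : 𝒳 → [-∞, +∞]` and `X ∈ H` with `φ(γ(X)) ∈ ℝ`:
`φ ∘ γ` is Fréchet differentiable at `X` iff `φ` is Fréchet differentiable at `γ(X)`,
in which case `∇(φ ∘ γ)(X) = Λ_a (∇φ(γ(X)))` for every `a ∈ A_X`. -/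
theorem frechet_diff_spectral_iff
    [FiniteDimensional ℝ 𝒳] [FiniteDimensional ℝ H]
    (𝔖 : SDS 𝒳 H S A) (hcl : IsClosed 𝔖.LambdaSet)
    (φ : 𝒳 → EReal) (hφ : ∀ (s : S) (x : 𝒳), φ (𝔖.act s x) = φ x)
    (X : H) (hX : ∃ r : ℝ, φ (𝔖.γ X) = (r : EReal)) :
    (EFDiffAt (fun Z => φ (𝔖.γ Z)) X ↔ EFDiffAt φ (𝔖.γ X)) ∧
    (∀ a ∈ 𝔖.AX X, ∀ g : 𝒳, EHasGradientAt φ g (𝔖.γ X) →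
      EHasGradientAt (fun Z => φ (𝔖.γ Z)) (𝔖.Λ a g) X) :=
  frechet_diff_spectral_iff_general 𝔖 φ hφ X
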